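/- arXiv:1811.00748 — 3 statements merged into one kernel-verified Lean document; each statement's English description precedes it below -/
import Mathlib

section
/- For all x in (0, π/2), -x²/3 - log(x/tan x) > 0, equivalently log(tan x) - log x > x²/3. -/
/-! With `g x = sin x - x cos x - (x²/3) sin x` we have `g 0 = 0` and `g' x = (x/3)(sin x - x cos x)`,
which is positive on `(0, π/2)` because `tan x > x`; hence `g > 0`, i.e. `x / tan x < 1 - x²/3`
there. The claim follows from `log y ≤ y - 1`. -/

open Real Set

namespace Real

lemma mul_cos_lt_sin {x : ℝ} (hx0 : 0 < x) (hx : x < π / 2) : x * cos x < sin x := by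
  have hcos : 0 < cos x := cos_pos_of_mem_Ioo ⟨by linarith [pi_pos], hx⟩
  have htan := lt_tan hx0 hx
  rwa [tan_eq_sin_div_cos, lt_div_iff₀ hcos] at htan

lemma hasDerivAt_sin_sub_mul_cos_sub_sq_div_three_mul_sin (x : ℝ) :
    HasDerivAt (fun x => sin x - x * cos x - x ^ 2 / 3 * sin x)
      (x / 3 * (sin x - x * cos x)) x := by
  have h := ((hasDerivAt_sin x).sub ((hasDerivAt_id x).mul (hasDerivAt_cos x))).sub
    (((hasDerivAt_pow 2 x).div_const 3).mul (hasDerivAt_sin x))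
  exact h.congr_deriv (by simp only [id]; ring)

lemma sq_div_three_mul_sin_lt_sin_sub_mul_cos {x : ℝ} (hx0 : 0 < x) (hx : x < π / 2) :
    x ^ 2 / 3 * sin x < sin x - x * cos x := by
  let g : ℝ → ℝ := fun x => sin x - x * cos x - x ^ 2 / 3 * sin x
  have hmono : StrictMonoOn g (Icc 0 (π / 2)) := by
    refine strictMonoOn_of_deriv_pos (convex_Icc _ _) (by fun_prop) fun y hy => ?_
    rw [interior_Icc] at hy
    rw [(hasDerivAt_sin_sub_mul_cos_sub_sq_div_three_mul_sin y).deriv]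
    have hy0 : 0 < y := hy.1
    have hpos : 0 < sin y - y * cos y := sub_pos.2 (mul_cos_lt_sin hy.1 hy.2)
    positivity
  have hg : g 0 < g x := hmono ⟨le_rfl, by positivity⟩ ⟨hx0.le, hx.le⟩ hx0
  simp only [g, sin_zero, cos_zero] at hg
  linarith

lemma div_tan_lt_one_sub_sq_div_three {x : ℝ} (hx0 : 0 < x) (hx : x < π / 2) :
    x / tan x < 1 - x ^ 2 / 3 := by
  have hsin : 0 < sin x := sin_pos_of_pos_of_lt_pi hx0 (by linarith [pi_pos])
  rw [tan_eq_sin_div_cos, div_div_eq_mul_div, div_lt_iff₀ hsin]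
  linarith [sq_div_three_mul_sin_lt_sin_sub_mul_cos hx0 hx]

end Real

theorem stmt_7 : ∀ x ∈ Set.Ioo (0:ℝ) (Real.pi/2), -x^2/3 - Real.log (x / Real.tan x) > 0 := by
  rintro x ⟨hx0, hx⟩
  have htan : 0 < tan x := tan_pos_of_pos_of_lt_pi_div_two hx0 hx
  have hlog : log (x / tan x) ≤ x / tan x - 1 := log_le_sub_one_of_pos (by positivity)
  linarith [div_tan_lt_one_sub_sq_div_three hx0 hx]
end

section
/- Fix x₀ in (0, π/2) and let a = -log(cos x₀)/x₀². Then for all x in (0, x₀), e^(-a·x²) < cos x. -/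
/-!
Taking logarithms, the inequality says `log (cos x₀) / x₀² < log (cos x) / x²`, so it suffices
that `x ↦ log (cos x) / x²` is strictly decreasing on `(0, π/2)`. Its derivative is
`-(x tan x + 2 log (cos x)) / x³`, and `x tan x + 2 log (cos x)` vanishes at `0` and has
derivative `(x - sin x cos x) / cos² x > 0`.
-/

open Real Set

lemma Real.sin_mul_cos_lt {x : ℝ} (hx : 0 < x) : sin x * cos x < x := by
  have h := sin_lt (by positivity : 0 < 2 * x)
  rw [sin_two_mul] at h
  linarith

lemma Real.cos_pos_of_mem_Ico {x : ℝ} (hx : x ∈ Ico 0 (π / 2)) : 0 < cos x :=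
  cos_pos_of_mem_Ioo ⟨by linarith [hx.1, pi_pos], hx.2⟩

lemma Real.hasDerivAt_mul_tan_add_two_mul_log_cos {x : ℝ} (hx : cos x ≠ 0) :
    HasDerivAt (fun x => x * tan x + 2 * log (cos x)) ((x - sin x * cos x) / cos x ^ 2) x := by
  have h : HasDerivAt (fun x => x * tan x + 2 * log (cos x))
      (1 * tan x + x * (1 / cos x ^ 2) + 2 * (-sin x / cos x)) x :=
    ((hasDerivAt_id x).mul (hasDerivAt_tan hx)).add (((hasDerivAt_cos x).log hx).const_mul 2)
  refine h.congr_deriv ?_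
  rw [tan_eq_sin_div_cos]
  field_simp
  ring

lemma Real.mul_tan_add_two_mul_log_cos_pos {x : ℝ} (hx : x ∈ Ioo 0 (π / 2)) :
    0 < x * tan x + 2 * log (cos x) := by
  have hmono : StrictMonoOn (fun x => x * tan x + 2 * log (cos x)) (Ico 0 (π / 2)) := by
    refine strictMonoOn_of_hasDerivWithinAt_pos (f' := fun x => (x - sin x * cos x) / cos x ^ 2)
      (convex_Ico _ _) (fun y hy => ?_) (fun y hy => ?_) (fun y hy => ?_)
    · exact (hasDerivAt_mul_tan_add_two_mul_log_cos
        (cos_pos_of_mem_Ico hy).ne').continuousAt.continuousWithinAt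
    · rw [interior_Ico] at hy
      exact (hasDerivAt_mul_tan_add_two_mul_log_cos
        (cos_pos_of_mem_Ico (Ioo_subset_Ico_self hy)).ne').hasDerivWithinAt
    · rw [interior_Ico] at hy
      have hcos := cos_pos_of_mem_Ico (Ioo_subset_Ico_self hy)
      exact div_pos (by linarith [sin_mul_cos_lt hy.1]) (by positivity)
  simpa using hmono ⟨le_rfl, by linarith [pi_pos]⟩ (Ioo_subset_Ico_self hx) hx.1

lemma Real.strictAntiOn_log_cos_div_sq :
    StrictAntiOn (fun x => log (cos x) / x ^ 2) (Ioo 0 (π / 2)) := by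
  have hderiv : ∀ x ∈ Ioo 0 (π / 2), HasDerivAt (fun x => log (cos x) / x ^ 2)
      (-(x * tan x + 2 * log (cos x)) / x ^ 3) x := by
    intro x hx
    have hcos := (cos_pos_of_mem_Ico (Ioo_subset_Ico_self hx)).ne'
    have h : HasDerivAt (fun x => log (cos x) / x ^ 2)
        ((-sin x / cos x * x ^ 2 - log (cos x) * (2 * x)) / (x ^ 2) ^ 2) x := by
      refine ((hasDerivAt_cos x).log hcos).div ?_ (pow_ne_zero 2 hx.1.ne')
      simpa using hasDerivAt_pow 2 x
    refine h.congr_deriv ?_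
    rw [tan_eq_sin_div_cos]
    field_simp
    ring
  refine strictAntiOn_of_hasDerivWithinAt_neg
    (f' := fun x => -(x * tan x + 2 * log (cos x)) / x ^ 3) (convex_Ioo _ _)
    (fun x hx => (hderiv x hx).continuousAt.continuousWithinAt) (fun x hx => ?_)
    (fun x hx => ?_) <;> rw [interior_Ioo] at hx
  · exact (hderiv x hx).hasDerivWithinAt
  · exact div_neg_of_neg_of_pos (neg_neg_of_pos (mul_tan_add_two_mul_log_cos_pos hx))
      (by positivity [hx.1])

theorem stmt_8 (x₀ : ℝ) (hx₀ : x₀ ∈ Set.Ioo (0:ℝ) (Real.pi/2)) :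
    ∀ x ∈ Set.Ioo 0 x₀, Real.exp (-(-Real.log (Real.cos x₀) / x₀^2) * x^2) < Real.cos x := by
  intro x hx
  have hxI : x ∈ Ioo 0 (π / 2) := ⟨hx.1, hx.2.trans hx₀.2⟩
  have hlt : log (cos x₀) / x₀ ^ 2 * x ^ 2 < log (cos x) := by
    have h := strictAntiOn_log_cos_div_sq hxI hx₀ hx.2
    rwa [lt_div_iff₀ (by positivity [hx.1])] at h
  calc exp (-(-log (cos x₀) / x₀ ^ 2) * x ^ 2)
      = exp (log (cos x₀) / x₀ ^ 2 * x ^ 2) := by congr 1; ring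
    _ < exp (log (cos x)) := exp_lt_exp.mpr hlt
    _ = cos x := exp_log (cos_pos_of_mem_Ico (Ioo_subset_Ico_self hxI))
end

section
/- Fix x₀ in (0, π/2) and let b = -log(x₀/tan x₀)/x₀². Then for all x in (0, x₀), e^(-b·x²) < x/tan x. -/
/-!
Put `g t = log (t / tan t) / t ^ 2`; the claim is `g x₀ * x ^ 2 < g x * x ^ 2`, so it suffices that
`g` is strictly decreasing on `(0, π/2)`. The sign of `g'` is that of
`1 - t / (sin t cos t) - 2 log (t / tan t)`; bounding the logarithm by `log y ≥ 1 - 1/y` reduces its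
negativity to `2 sin² t < t² + t sin t cos t`, i.e. `4 (1 - cos s) < s² + s sin s` for `s = 2t`,
which follows on `(0, π]` from the alternating Taylor bounds for `sin` and `cos` of degree 7 and 6.
-/

open Real Set

theorem le_of_hasDerivAt_le {f g f' g' : ℝ → ℝ} {a x : ℝ}
    (hf : ∀ t, HasDerivAt f (f' t) t) (hg : ∀ t, HasDerivAt g (g' t) t)
    (ha : f a ≤ g a) (hd : ∀ t, a ≤ t → f' t ≤ g' t) (hx : a ≤ x) : f x ≤ g x := by
  have hmono : MonotoneOn (fun t => g t - f t) (Ici a) :=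
    monotoneOn_of_hasDerivWithinAt_nonneg (convex_Ici a)
      (fun t _ => ((hg t).sub (hf t)).continuousAt.continuousWithinAt)
      (fun t _ => ((hg t).sub (hf t)).hasDerivWithinAt)
      (fun t ht => sub_nonneg.2 (hd t (interior_subset ht)))
  linarith [hmono self_mem_Ici hx hx]

theorem cos_le_taylor_four (x : ℝ) : cos x ≤ 1 - x ^ 2 / 2 + x ^ 4 / 24 := by
  have key : ∀ x, 0 ≤ x → cos x ≤ 1 - x ^ 2 / 2 + x ^ 4 / 24 := fun x hx =>
    le_of_hasDerivAt_le hasDerivAt_cos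
      (fun t => by
        convert ((hasDerivAt_const t 1).sub ((hasDerivAt_pow 2 t).div_const 2)).add
          ((hasDerivAt_pow 4 t).div_const 24) using 1)
      (by norm_num) (fun t ht => by linarith [sin_ge_sub_cube ht]) hx
  simpa [cos_abs, (by decide : Even 4).pow_abs] using key |x| (abs_nonneg x)

theorem sin_le_taylor_five {x : ℝ} (hx : 0 ≤ x) : sin x ≤ x - x ^ 3 / 6 + x ^ 5 / 120 :=
  le_of_hasDerivAt_le hasDerivAt_sin
    (fun t => by
      convert ((hasDerivAt_id t).sub ((hasDerivAt_pow 3 t).div_const 6)).add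
        ((hasDerivAt_pow 5 t).div_const 120) using 1)
    (by norm_num) (fun t _ => by linarith [cos_le_taylor_four t]) hx

theorem taylor_six_le_cos (x : ℝ) : 1 - x ^ 2 / 2 + x ^ 4 / 24 - x ^ 6 / 720 ≤ cos x := by
  have key : ∀ x, 0 ≤ x → 1 - x ^ 2 / 2 + x ^ 4 / 24 - x ^ 6 / 720 ≤ cos x := fun x hx =>
    le_of_hasDerivAt_le
      (fun t => by
        convert (((hasDerivAt_const t 1).sub ((hasDerivAt_pow 2 t).div_const 2)).add
          ((hasDerivAt_pow 4 t).div_const 24)).sub ((hasDerivAt_pow 6 t).div_const 720) using 1)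
      hasDerivAt_cos (by norm_num) (fun t ht => by linarith [sin_le_taylor_five ht]) hx
  simpa [cos_abs, (by decide : Even 4).pow_abs, (by decide : Even 6).pow_abs]
    using key |x| (abs_nonneg x)

theorem taylor_seven_le_sin {x : ℝ} (hx : 0 ≤ x) :
    x - x ^ 3 / 6 + x ^ 5 / 120 - x ^ 7 / 5040 ≤ sin x :=
  le_of_hasDerivAt_le
    (fun t => by
      convert (((hasDerivAt_id t).sub ((hasDerivAt_pow 3 t).div_const 6)).add
        ((hasDerivAt_pow 5 t).div_const 120)).sub ((hasDerivAt_pow 7 t).div_const 5040) using 1)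
    hasDerivAt_sin (by norm_num) (fun t _ => by linarith [taylor_six_le_cos t]) hx

theorem four_mul_one_sub_cos_lt {s : ℝ} (hs : 0 < s) (hsπ : s ≤ π) :
    4 * (1 - cos s) < s ^ 2 + s * sin s := by
  have hsin := mul_le_mul_of_nonneg_left (taylor_seven_le_sin hs.le) hs.le
  -- The Taylor bounds leave `s ^ 2 + s * sin s - 4 * (1 - cos s) ≥ s ^ 6 * (14 - s ^ 2) / 5040`.
  have hs14 : s ^ 2 < 14 := by nlinarith [pi_lt_d2]
  nlinarith [taylor_six_le_cos s, mul_pos (pow_pos hs 6) (sub_pos.2 hs14)]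

theorem two_mul_sin_sq_lt {t : ℝ} (ht : 0 < t) (htπ : t ≤ π / 2) :
    2 * sin t ^ 2 < t ^ 2 + t * sin t * cos t := by
  have h := four_mul_one_sub_cos_lt (s := 2 * t) (by positivity) (by linarith)
  rw [cos_two_mul, cos_sq', sin_two_mul] at h
  linarith

theorem one_sub_div_sin_mul_cos_lt_two_mul_log {t : ℝ} (ht : t ∈ Ioo 0 (π / 2)) :
    1 - t / (sin t * cos t) < 2 * log (t / tan t) := by
  obtain ⟨ht0, htπ⟩ := ht
  have hsin : 0 < sin t := sin_pos_of_pos_of_lt_pi ht0 (by linarith [pi_pos])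
  have hcos : 0 < cos t := cos_pos_of_mem_Ioo ⟨by linarith, htπ⟩
  have htan : 0 < tan t := tan_pos_of_pos_of_lt_pi_div_two ht0 htπ
  have hlog : 1 - tan t / t ≤ log (t / tan t) := by
    simpa [inv_div] using one_sub_inv_le_log_of_pos (div_pos ht0 htan)
  have htrig : 2 * (tan t / t) - t / (sin t * cos t) < 1 := by
    rw [tan_eq_sin_div_cos, show 2 * (sin t / cos t / t) - t / (sin t * cos t)
        = (2 * sin t ^ 2 - t ^ 2) / (t * sin t * cos t) by field_simp,
      div_lt_one (by positivity)]
    linarith [two_mul_sin_sq_lt ht0 htπ.le]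
  linarith

theorem hasDerivAt_log_div_tan {t : ℝ} (ht : t ∈ Ioo 0 (π / 2)) :
    HasDerivAt (fun t => log (t / tan t)) (1 / t - 1 / (sin t * cos t)) t := by
  obtain ⟨ht0, htπ⟩ := ht
  have hsin : 0 < sin t := sin_pos_of_pos_of_lt_pi ht0 (by linarith [pi_pos])
  have hcos : 0 < cos t := cos_pos_of_mem_Ioo ⟨by linarith, htπ⟩
  have htan : 0 < tan t := tan_pos_of_pos_of_lt_pi_div_two ht0 htπ
  refine (((hasDerivAt_id' t).div (hasDerivAt_tan hcos.ne') htan.ne').log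
    (div_pos ht0 htan).ne').congr_deriv ?_
  rw [Pi.div_apply, tan_eq_sin_div_cos]
  field_simp

theorem strictAntiOn_log_div_tan_div_sq :
    StrictAntiOn (fun t => log (t / tan t) / t ^ 2) (Ioo 0 (π / 2)) := by
  have hderiv : ∀ t ∈ Ioo 0 (π / 2), HasDerivAt (fun t => log (t / tan t) / t ^ 2)
      (((1 / t - 1 / (sin t * cos t)) * t ^ 2 - log (t / tan t) * (2 * t)) / (t ^ 2) ^ 2) t :=
    fun t ht => (hasDerivAt_log_div_tan ht).div (by simpa using hasDerivAt_pow 2 t)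
      (pow_pos ht.1 2).ne'
  refine strictAntiOn_of_hasDerivWithinAt_neg (convex_Ioo 0 (π / 2))
    (fun t ht => (hderiv t ht).continuousAt.continuousWithinAt)
    (fun t ht => (hderiv t (interior_subset ht)).hasDerivWithinAt) fun t ht => ?_
  rw [interior_Ioo] at ht
  obtain ⟨ht0, htπ⟩ := ht
  have hsin : 0 < sin t := sin_pos_of_pos_of_lt_pi ht0 (by linarith [pi_pos])
  have hcos : 0 < cos t := cos_pos_of_mem_Ioo ⟨by linarith, htπ⟩
  have hnum : (1 / t - 1 / (sin t * cos t)) * t ^ 2 - log (t / tan t) * (2 * t)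
      = t * (1 - t / (sin t * cos t) - 2 * log (t / tan t)) := by
    field_simp
  have hlog := one_sub_div_sin_mul_cos_lt_two_mul_log ⟨ht0, htπ⟩
  rw [hnum]
  exact div_neg_of_neg_of_pos (mul_neg_of_pos_of_neg ht0 (by linarith)) (by positivity)

theorem stmt_10 (x₀ : ℝ) (hx₀ : x₀ ∈ Set.Ioo (0:ℝ) (Real.pi/2)) :
    ∀ x ∈ Set.Ioo 0 x₀,
      Real.exp (-(-Real.log (x₀ / Real.tan x₀) / x₀^2) * x^2) < x / Real.tan x := by
  intro x hx
  have hxI : x ∈ Ioo 0 (π / 2) := ⟨hx.1, hx.2.trans hx₀.2⟩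
  have hdecr := strictAntiOn_log_div_tan_div_sq hxI hx₀ hx.2
  have htan : 0 < tan x := tan_pos_of_pos_of_lt_pi_div_two hxI.1 hxI.2
  calc exp (-(-log (x₀ / tan x₀) / x₀ ^ 2) * x ^ 2)
      = exp (log (x₀ / tan x₀) / x₀ ^ 2 * x ^ 2) := by rw [neg_div, neg_neg]
    _ < exp (log (x / tan x) / x ^ 2 * x ^ 2) :=
      exp_lt_exp.2 (mul_lt_mul_of_pos_right hdecr (pow_pos hx.1 2))
    _ = x / tan x := by
      rw [div_mul_cancel₀ _ (pow_pos hx.1 2).ne', exp_log (div_pos hx.1 htan)]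
end
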